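/- For every positive integer n and every real θ, the Lobachevsky function satisfies the distribution relation Л(nθ) = n · Σ_{k=0}^{n−1} Л(θ + kπ/n). -/

import Mathlib

/-!
Since `|2 sin t| = |1 - e^{2it}|` for real `t`, factoring `1 - w^n` over the `n`-th roots of unity
gives `∏_k |2 sin (θ + kπ/n)| = |2 sin nθ|`. Taking logarithms off the countable zero set of
`sin nθ` and integrating over `[0, θ]` yields `Л(nθ) = n ∑_k Л(θ + kπ/n) - n ∑_k Л(kπ/n)`.
For `n = 2` this forces `Л(π) = 0`, and then the reflection `Л(π - x) = -Л(x)` pairs off the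
terms of the constant `∑_k Л(kπ/n)`, which therefore vanishes.
-/

/-- The Lobachevsky function `Л(θ) = -∫₀^θ log |2 sin t| dt`. -/
noncomputable def lobachevsky (θ : ℝ) : ℝ :=
  -∫ t in (0 : ℝ)..θ, Real.log |2 * Real.sin t|

open Real Finset MeasureTheory

theorem IsPrimitiveRoot.prod_range_one_sub_pow_mul {R : Type*} [CommRing R] [IsDomain R]
    {ζ : R} {n : ℕ} (hζ : IsPrimitiveRoot ζ n) (hn : 0 < n) (α : R) :
    ∏ k ∈ range n, (1 - ζ ^ k * α) = 1 - α ^ n := by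
  simpa [Polynomial.eval_prod] using
    (congrArg (Polynomial.eval 1) (X_pow_sub_C_eq_prod hζ hn rfl)).symm

theorem abs_two_mul_sin_eq_norm (x : ℝ) :
    |2 * sin x| = ‖1 - Complex.exp (Complex.I * ↑(2 * x))‖ := by
  rw [norm_sub_rev, Complex.norm_exp_I_mul_ofReal_sub_one, Real.norm_eq_abs]
  ring_nf

theorem prod_range_abs_two_mul_sin {n : ℕ} (hn : 0 < n) (θ : ℝ) :
    ∏ k ∈ range n, |2 * sin (θ + k * π / n)| = |2 * sin (n * θ)| := by
  have hζ := Complex.isPrimitiveRoot_exp n hn.ne'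
  have hfactor (k : ℕ) : Complex.exp (Complex.I * ↑(2 * (θ + k * π / n))) =
      Complex.exp (2 * π * Complex.I / n) ^ k * Complex.exp (Complex.I * ↑(2 * θ)) := by
    rw [← Complex.exp_nat_mul, ← Complex.exp_add]
    push_cast
    ring_nf
  have hpow :
      Complex.exp (Complex.I * ↑(2 * θ)) ^ n = Complex.exp (Complex.I * ↑(2 * (n * θ))) := by
    rw [← Complex.exp_nat_mul]
    push_cast
    ring_nf
  simp_rw [abs_two_mul_sin_eq_norm, hfactor, ← norm_prod, hζ.prod_range_one_sub_pow_mul hn, hpow]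

theorem intervalIntegrable_log_abs_two_mul_sin (a b : ℝ) :
    IntervalIntegrable (fun t => log |2 * sin t|) volume a b := by
  simpa only [Real.norm_eq_abs] using
    (analyticOnNhd_const.mul analyticOnNhd_sin).meromorphicOn.intervalIntegrable_log_norm
      (a := a) (b := b) (f := fun t => 2 * sin t)

theorem log_abs_two_mul_sin_mul_eq_sum {n : ℕ} (hn : 0 < n) {x : ℝ} (hx : sin (n * x) ≠ 0) :
    log |2 * sin (n * x)| = ∑ k ∈ range n, log |2 * sin (x + k * π / n)| := by
  have hprod : ∏ k ∈ range n, |2 * sin (x + k * π / n)| ≠ 0 := by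
    rw [prod_range_abs_two_mul_sin hn]
    exact abs_ne_zero.mpr (mul_ne_zero two_ne_zero hx)
  rw [← prod_range_abs_two_mul_sin hn, log_prod]
  exact prod_ne_zero_iff.mp hprod

theorem lobachevsky_sub_lobachevsky (a b : ℝ) :
    lobachevsky a - lobachevsky b = ∫ t in a..b, log |2 * sin t| := by
  rw [lobachevsky, lobachevsky, neg_sub_neg, intervalIntegral.integral_interval_sub_left]
  all_goals exact intervalIntegrable_log_abs_two_mul_sin _ _

theorem lobachevsky_zero : lobachevsky 0 = 0 := by
  simp [lobachevsky]

theorem ae_sin_mul_ne_zero {n : ℕ} (hn : 0 < n) : ∀ᵐ x : ℝ, sin (n * x) ≠ 0 := by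
  refine Set.Countable.measure_zero ?_ _
  refine (Set.countable_range fun m : ℤ => m * π / n).mono fun x hx => ?_
  obtain ⟨m, hm⟩ := sin_eq_zero_iff.mp (not_not.mp hx)
  refine ⟨m, ?_⟩
  field_simp
  linarith

theorem lobachevsky_nat_mul_eq {n : ℕ} (hn : 0 < n) (θ : ℝ) :
    lobachevsky (n * θ) =
      n * ∑ k ∈ range n, lobachevsky (θ + k * π / n) -
        n * ∑ k ∈ range n, lobachevsky (k * π / n) := by
  have hn' : (n : ℝ) ≠ 0 := by positivity
  have hdilate : ∫ x in 0..θ, log |2 * sin (n * x)| = -(n : ℝ)⁻¹ * lobachevsky (n * θ) := by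
    rw [intervalIntegral.integral_comp_mul_left (fun t => log |2 * sin t|) hn', mul_zero, smul_eq_mul,
      lobachevsky, neg_mul_neg]
  have hshift (c : ℝ) :
      ∫ x in 0..θ, log |2 * sin (x + c)| = lobachevsky c - lobachevsky (θ + c) := by
    rw [intervalIntegral.integral_comp_add_right (fun t => log |2 * sin t|), zero_add,
      lobachevsky_sub_lobachevsky]
  have hsplit : ∫ x in 0..θ, log |2 * sin (n * x)| =
      ∑ k ∈ range n, ∫ x in 0..θ, log |2 * sin (x + k * π / n)| := by
    rw [← intervalIntegral.integral_finsetSum]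
    · refine intervalIntegral.integral_congr_ae ((ae_sin_mul_ne_zero hn).mono fun x hx _ => ?_)
      exact log_abs_two_mul_sin_mul_eq_sum hn hx
    · intro k _
      simpa using (intervalIntegrable_log_abs_two_mul_sin (0 + k * π / n) (θ + k * π / n))
        |>.comp_add_right (k * π / n)
  rw [hdilate] at hsplit
  simp only [hshift, sum_sub_distrib] at hsplit
  rw [neg_mul, neg_eq_iff_eq_neg, inv_mul_eq_iff_eq_mul₀ hn'] at hsplit
  rw [hsplit]
  ring

theorem lobachevsky_pi_sub (x : ℝ) : lobachevsky (π - x) = lobachevsky π - lobachevsky x := by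
  have hreflect : ∫ t in x..π, log |2 * sin t| = ∫ t in 0..π - x, log |2 * sin t| := by
    simpa [sin_pi_sub] using (intervalIntegral.integral_comp_sub_left
      (fun t => log |2 * sin t|) π (a := 0) (b := π - x)).symm
  calc lobachevsky (π - x) = -∫ t in x..π, log |2 * sin t| := by rw [hreflect, lobachevsky]
    _ = lobachevsky π - lobachevsky x := by rw [← lobachevsky_sub_lobachevsky]; ring

theorem lobachevsky_pi : lobachevsky π = 0 := by
  -- the case `n = 2`, `θ = π / 2` reads `Л(π) = 2 Л(π)`
  have h := lobachevsky_nat_mul_eq (n := 2) two_pos (π / 2)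
  norm_num [sum_range_succ, lobachevsky_zero, mul_div_cancel₀] at h
  linarith

theorem sum_range_lobachevsky_mul_pi_div {n : ℕ} (hn : 0 < n) :
    ∑ k ∈ range n, lobachevsky (k * π / n) = 0 := by
  have hn' : (n : ℝ) ≠ 0 := by positivity
  have hshift : ∑ k ∈ range n, lobachevsky ((k + 1 : ℕ) * π / n) =
      ∑ k ∈ range n, lobachevsky (k * π / n) := by
    have h := (sum_range_succ' (fun k => lobachevsky (k * π / n)) n).symm.trans
      (sum_range_succ (fun k => lobachevsky (k * π / n)) n)
    rwa [Nat.cast_zero, zero_mul, zero_div, lobachevsky_zero, add_zero, mul_div_cancel_left₀ π hn',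
      lobachevsky_pi, add_zero] at h
  have hreflect : ∑ k ∈ range n, lobachevsky (k * π / n) =
      -∑ k ∈ range n, lobachevsky ((k + 1 : ℕ) * π / n) := by
    rw [← sum_range_reflect, ← sum_neg_distrib]
    refine sum_congr rfl fun k hk => ?_
    have hkn : k < n := mem_range.mp hk
    have harg : ((n - 1 - k : ℕ) : ℝ) * π / n = π - (k + 1 : ℕ) * π / n := by
      rw [Nat.cast_sub (by omega), Nat.cast_sub (by omega)]
      field_simp
      push_cast
      ring
    rw [harg, lobachevsky_pi_sub, lobachevsky_pi, zero_sub]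
  linarith

/-- The distribution relation `Л(nθ) = n ∑_{k=0}^{n-1} Л(θ + kπ/n)`. -/
theorem lobachevsky_distribution (n : ℕ) (hn : 0 < n) (θ : ℝ) :
    lobachevsky (n * θ) =
      n * ∑ k ∈ Finset.range n, lobachevsky (θ + k * Real.pi / n) := by
  rw [lobachevsky_nat_mul_eq hn, sum_range_lobachevsky_mul_pi_div hn, mul_zero, sub_zero]
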